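/- arXiv:1709.05800 — 6 statements merged into one kernel-verified Lean document; each statement's English description precedes it below -/
import Mathlib

section
/- Let Γ be a finite simple graph and let π = {C₁, …, C_t, D} be a partition of V(Γ) satisfying: (i) {C₁, …, C_t} is an equitable partition of the induced subgraph on V(Γ) \ D, and (ii) for every x ∈ D and every i ∈ [t], the vertex x has either 0, |C_i|/2, or |C_i| neighbors in C_i. Let sw_π Γ be the graph obtained from Γ by interchanging adjacency and nonadjacency between each x ∈ D and the vertices of C_i whenever x has exactly |C_i|/2 neighbors in C_i. Then the adjacency matrices of Γ and of sw_π Γ have the same spectrum (the graphs are cospectral). -/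
open Classical Matrix Kronecker

/-- The number of neighbors of `x` inside the set `c`. -/
noncomputable def nbrCount {V : Type*} (G : SimpleGraph V) (x : V) (c : Finset V) : ℕ :=
  (c.filter fun y => G.Adj x y).card

/-- `{C i} ∪ {D}` is a partition of the vertex set (all cells nonempty, pairwise
disjoint, covering). -/
def IsPartitionWithCell {V ι : Type*} (C : ι → Finset V) (D : Finset V) : Prop :=
  (∀ i, (C i).Nonempty) ∧ D.Nonempty ∧
    Pairwise (fun i j => Disjoint (C i) (C j)) ∧
    (∀ i, Disjoint (C i) D) ∧ ∀ x : V, x ∈ D ∨ ∃ i, x ∈ C i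

/-- The family of cells `C` is equitable for `G` : any two vertices of a cell `C i`
have the same number of neighbors in each cell `C j`. -/
def IsEquitableOn {V ι : Type*} (G : SimpleGraph V) (C : ι → Finset V) : Prop :=
  ∀ i j, ∀ x ∈ C i, ∀ y ∈ C i, nbrCount G x (C j) = nbrCount G y (C j)

/-- Every vertex of `D` has `0`, `|C i|/2` or `|C i|` neighbors in each cell `C i`. -/
def GMhalf {V ι : Type*} (G : SimpleGraph V) (C : ι → Finset V) (D : Finset V) : Prop :=
  ∀ x ∈ D, ∀ i, nbrCount G x (C i) = 0 ∨ 2 * nbrCount G x (C i) = (C i).card ∨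
    nbrCount G x (C i) = (C i).card

/-- `π = {C₁, …, C_t, D}` is a Godsil–McKay partition of `G` with Godsil–McKay cell `D`. -/
def IsGMPartition {V ι : Type*} (G : SimpleGraph V) (C : ι → Finset V) (D : Finset V) : Prop :=
  IsPartitionWithCell C D ∧ IsEquitableOn G C ∧ GMhalf G C D

/-- The graph obtained from `G` by Godsil–McKay switching with respect to the
partition `{C₁, …, C_t, D}` : adjacency and nonadjacency between `x ∈ D` and the
vertices of `C i` are interchanged whenever `x` has exactly `|C i|/2` neighbors in `C i`. -/
def GMswitch {V ι : Type*} (G : SimpleGraph V) (C : ι → Finset V) (D : Finset V) :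
    SimpleGraph V where
  Adj x y := x ≠ y ∧ Xor' (G.Adj x y)
    (∃ i, (x ∈ D ∧ y ∈ C i ∧ 2 * nbrCount G x (C i) = (C i).card) ∨
          (y ∈ D ∧ x ∈ C i ∧ 2 * nbrCount G y (C i) = (C i).card))
  symm := by
    constructor
    rintro x y ⟨hne, h⟩
    refine ⟨hne.symm, ?_⟩
    have h1 : (G.Adj y x) = (G.Adj x y) := propext (G.adj_comm y x)
    have h2 : (∃ i, (y ∈ D ∧ x ∈ C i ∧ 2 * nbrCount G y (C i) = (C i).card) ∨
          (x ∈ D ∧ y ∈ C i ∧ 2 * nbrCount G x (C i) = (C i).card)) =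
        (∃ i, (x ∈ D ∧ y ∈ C i ∧ 2 * nbrCount G x (C i) = (C i).card) ∨
          (y ∈ D ∧ x ∈ C i ∧ 2 * nbrCount G y (C i) = (C i).card)) :=
      propext (exists_congr fun i => or_comm)
    rw [h1, h2]
    exact h
  loopless := by constructor; rintro x ⟨hne, -⟩; exact hne rfl

/-- The adjacency matrix of a graph, with rational entries. -/
noncomputable def adjM {V : Type*} (G : SimpleGraph V) : Matrix V V ℚ :=
  Matrix.of fun x y => if G.Adj x y then 1 else 0

/-- The all-one matrix. -/
def allOnes (V : Type*) : Matrix V V ℚ := Matrix.of fun _ _ => 1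

/-- The switching matrix `Q` of the partition `{C₁, …, C_t, D}` :
`Q x y = 2/|C i| - δ_{x y}` if `x, y ∈ C i`, `Q x y = δ_{x y}` if `x, y ∈ D`,
and `Q x y = 0` otherwise. -/
noncomputable def switchMatrix {V ι : Type*} (C : ι → Finset V) (D : Finset V) :
    Matrix V V ℚ :=
  Matrix.of fun x y =>
    if h : ∃ i, x ∈ C i ∧ y ∈ C i then
      2 / ((C h.choose).card : ℚ) - (if x = y then 1 else 0)
    else if x ∈ D ∧ y ∈ D then (if x = y then 1 else 0) else 0

/-- The characteristic matrix of a family of cells: `S x i = 1` iff `x ∈ C i`. -/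
noncomputable def charMat {V ι : Type*} (C : ι → Finset V) : Matrix V ι ℚ :=
  Matrix.of fun x i => if x ∈ C i then 1 else 0

/-- `A₀ = I`, `A₁ = A(G)`, `A₂ = J - I - A(G)`. -/
noncomputable def stdMats {V : Type*} [DecidableEq V] (G : SimpleGraph V) :
    Fin 3 → Matrix V V ℚ :=
  ![1, adjM G, allOnes V - 1 - adjM G]

/-- The three basic relations: `i = 0` : equality, `i = 1` : adjacency,
`i = 2` : distinct nonadjacency. -/
def relOfIdx {V : Type*} (G : SimpleGraph V) (i : Fin 3) (x y : V) : Prop :=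
  (i = 0 ∧ x = y) ∨ (i = 1 ∧ G.Adj x y) ∨ (i = 2 ∧ x ≠ y ∧ ¬ G.Adj x y)

lemma relOfIdx_symm {V : Type*} {G : SimpleGraph V} {i : Fin 3} {x y : V}
    (h : relOfIdx G i x y) : relOfIdx G i y x := by
  rcases h with ⟨hi, h⟩ | ⟨hi, h⟩ | ⟨hi, h1, h2⟩
  · exact Or.inl ⟨hi, h.symm⟩
  · exact Or.inr (Or.inl ⟨hi, h.symm⟩)
  · exact Or.inr (Or.inr ⟨hi, h1.symm, fun hadj => h2 hadj.symm⟩)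

/-- The unified graph product of type `[0 s₀₁ s₀₂; s₁₀ s₁₁ s₁₂; s₂₀ s₂₁ s₂₂]` :
the graph on `V × W` whose adjacency matrix is `Σ_{i,j} s i j • (A_i ⊗ B_j)`. -/
def unifiedProd {V W : Type*} (G : SimpleGraph V) (H : SimpleGraph W)
    (s : Fin 3 → Fin 3 → ℚ) : SimpleGraph (V × W) where
  Adj p q := p ≠ q ∧ ∃ i j, s i j = 1 ∧ relOfIdx G i p.1 q.1 ∧ relOfIdx H j p.2 q.2
  symm := by
    constructor
    rintro p q ⟨hne, i, j, hs, hi, hj⟩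
    exact ⟨hne.symm, i, j, hs, relOfIdx_symm hi, relOfIdx_symm hj⟩
  loopless := by constructor; rintro p ⟨hne, -⟩; exact hne rfl


/-!
The switching matrix `Q` is block diagonal with blocks `(2/|Cᵢ|) J - I` on the cells `Cᵢ` and
`I` on `D`; it is symmetric and `Q² = I`, so `Q A Q` has the same characteristic polynomial as
`A`. Blockwise, `Q A Q = A(sw_π Γ)`. On `Cᵢ × Cⱼ` the row and column sums of `A` are the constants
`bᵢⱼ`, `bⱼᵢ` by equitability, and double counting (`|Cᵢ| bᵢⱼ = |Cⱼ| bⱼᵢ`) makes the `J`-terms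
cancel. On `D × Cⱼ` the row of `x` becomes `(2/|Cⱼ|) b J - A`, where `b` is the number of
neighbours of `x` in `Cⱼ`: this is `A` when `b` is `0` or `|Cⱼ|`, and `J - A` when `b = |Cⱼ|/2`.
-/

open Finset

section Partition

variable {V ι : Type*} {C : ι → Finset V} {D : Finset V}

theorem IsPartitionWithCell.eq_of_mem_of_mem (hP : IsPartitionWithCell C D) {i j : ι} {x : V}
    (hi : x ∈ C i) (hj : x ∈ C j) : i = j := by
  by_contra h
  exact disjoint_left.mp (hP.2.2.1 h) hi hj

theorem IsPartitionWithCell.notMem_D (hP : IsPartitionWithCell C D) {i : ι} {x : V}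
    (hx : x ∈ C i) : x ∉ D :=
  disjoint_left.mp (hP.2.2.2.1 i) hx

theorem IsPartitionWithCell.mem_D_or_mem_cell (hP : IsPartitionWithCell C D) (x : V) :
    x ∈ D ∨ ∃ i, x ∈ C i :=
  hP.2.2.2.2 x

end Partition

section Adjacency

variable {V : Type*} (G : SimpleGraph V)

theorem adjM_apply (x y : V) : adjM G x y = if G.Adj x y then 1 else 0 := rfl

theorem adjM_comm (x y : V) : adjM G x y = adjM G y x := by
  simp only [adjM_apply, G.adj_comm]

theorem sum_adjM_right (x : V) (c : Finset V) : ∑ y ∈ c, adjM G x y = nbrCount G x c := by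
  simp only [adjM_apply, sum_boole, nbrCount]

theorem sum_adjM_left (y : V) (c : Finset V) : ∑ x ∈ c, adjM G x y = nbrCount G y c := by
  simp only [adjM_comm G _ y, sum_adjM_right]

theorem sum_nbrCount_comm (s t : Finset V) :
    ∑ x ∈ s, nbrCount G x t = ∑ y ∈ t, nbrCount G y s := by
  have h := sum_card_bipartiteAbove_eq_sum_card_bipartiteBelow (s := s) (t := t) G.Adj
  simpa only [bipartiteAbove, bipartiteBelow, nbrCount, G.adj_comm _ (_ : V)]
    using h

end Adjacency

theorem IsEquitableOn.card_mul_nbrCount_comm {V ι : Type*} {G : SimpleGraph V}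
    {C : ι → Finset V} (hEq : IsEquitableOn G C) {i j : ι} {x y : V} (hx : x ∈ C i)
    (hy : y ∈ C j) : #(C i) * nbrCount G x (C j) = #(C j) * nbrCount G y (C i) := by
  rw [← sum_const_nat fun z hz => hEq i j z hz x hx,
    ← sum_const_nat fun w hw => hEq j i w hw y hy, sum_nbrCount_comm]

section SwitchMatrix

variable {V ι : Type*} {C : ι → Finset V} {D : Finset V}

theorem switchMatrix_apply_of_mem_cell_of_notMem (hP : IsPartitionWithCell C D) {i : ι}
    {x y : V} (hx : x ∈ C i) (hy : y ∉ C i) : switchMatrix C D x y = 0 := by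
  have hnc : ¬ ∃ j, x ∈ C j ∧ y ∈ C j := fun ⟨_, hxj, hyj⟩ =>
    hy (hP.eq_of_mem_of_mem hxj hx ▸ hyj)
  simp [switchMatrix, hnc, hP.notMem_D hx]

variable [DecidableEq V]

theorem switchMatrix_apply_of_mem_D (hP : IsPartitionWithCell C D) {x : V} (hx : x ∈ D)
    (y : V) : switchMatrix C D x y = (1 : Matrix V V ℚ) x y := by
  have hnc : ¬ ∃ i, x ∈ C i ∧ y ∈ C i := fun ⟨_, hxi, _⟩ => hP.notMem_D hxi hx
  by_cases hy : y ∈ D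
  · simp [switchMatrix, hnc, hx, hy, one_apply]
  · simp [switchMatrix, hnc, hy, one_apply_ne (ne_of_mem_of_not_mem hx hy)]

theorem switchMatrix_apply_of_mem_cell (hP : IsPartitionWithCell C D) {i : ι} {x y : V}
    (hx : x ∈ C i) (hy : y ∈ C i) :
    switchMatrix C D x y = 2 / #(C i) - (1 : Matrix V V ℚ) x y := by
  have h : ∃ j, x ∈ C j ∧ y ∈ C j := ⟨i, hx, hy⟩
  rw [switchMatrix, Matrix.of_apply, dif_pos h, hP.eq_of_mem_of_mem h.choose_spec.1 hx,
    one_apply]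
  congr

theorem switchMatrix_transpose (hP : IsPartitionWithCell C D) :
    (switchMatrix C D)ᵀ = switchMatrix C D := by
  ext x y
  rw [transpose_apply]
  rcases hP.mem_D_or_mem_cell x with hx | ⟨i, hx⟩ <;>
    rcases hP.mem_D_or_mem_cell y with hy | ⟨j, hy⟩
  · simp only [switchMatrix_apply_of_mem_D hP hx, switchMatrix_apply_of_mem_D hP hy,
      one_apply, eq_comm]
  · rw [switchMatrix_apply_of_mem_D hP hx, one_apply_ne (ne_of_mem_of_not_mem hx (hP.notMem_D hy)),
      switchMatrix_apply_of_mem_cell_of_notMem hP hy fun h => hP.notMem_D h hx]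
  · rw [switchMatrix_apply_of_mem_D hP hy, one_apply_ne (ne_of_mem_of_not_mem hy (hP.notMem_D hx)),
      switchMatrix_apply_of_mem_cell_of_notMem hP hx fun h => hP.notMem_D h hy]
  · by_cases hij : i = j
    · subst hij
      simp only [switchMatrix_apply_of_mem_cell hP hx hy, switchMatrix_apply_of_mem_cell hP hy hx,
        one_apply, eq_comm]
    · rw [switchMatrix_apply_of_mem_cell_of_notMem hP hx fun h => hij (hP.eq_of_mem_of_mem h hy),
        switchMatrix_apply_of_mem_cell_of_notMem hP hy fun h => hij (hP.eq_of_mem_of_mem hx h)]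

variable [Fintype V]

theorem switchMatrix_mul_apply_of_mem_D (hP : IsPartitionWithCell C D) {x : V} (hx : x ∈ D)
    {n : Type*} (M : Matrix V n ℚ) (y : n) : (switchMatrix C D * M) x y = M x y := by
  simp_rw [mul_apply, switchMatrix_apply_of_mem_D hP hx]
  rw [← mul_apply, Matrix.one_mul]

theorem switchMatrix_mul_apply_of_mem_cell (hP : IsPartitionWithCell C D) {i : ι} {x : V}
    (hx : x ∈ C i) {n : Type*} (M : Matrix V n ℚ) (y : n) :
    (switchMatrix C D * M) x y = 2 / #(C i) * ∑ z ∈ C i, M z y - M x y := by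
  rw [mul_apply, ← sum_subset (subset_univ (C i)) fun z _ hz => by
    rw [switchMatrix_apply_of_mem_cell_of_notMem hP hx hz, zero_mul]]
  rw [sum_congr rfl fun z hz => by rw [switchMatrix_apply_of_mem_cell hP hx hz, sub_mul],
    sum_sub_distrib, ← mul_sum]
  simp [one_apply, hx]

theorem mul_switchMatrix_apply_of_mem_D (hP : IsPartitionWithCell C D) {y : V} (hy : y ∈ D)
    {m : Type*} (M : Matrix m V ℚ) (x : m) : (M * switchMatrix C D) x y = M x y := by
  rw [← transpose_apply (M * _), transpose_mul, switchMatrix_transpose hP,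
    switchMatrix_mul_apply_of_mem_D hP hy, transpose_apply]

theorem mul_switchMatrix_apply_of_mem_cell (hP : IsPartitionWithCell C D) {j : ι} {y : V}
    (hy : y ∈ C j) {m : Type*} (M : Matrix m V ℚ) (x : m) :
    (M * switchMatrix C D) x y = 2 / #(C j) * ∑ w ∈ C j, M x w - M x y := by
  rw [← transpose_apply (M * _), transpose_mul, switchMatrix_transpose hP,
    switchMatrix_mul_apply_of_mem_cell hP hy]
  rfl

theorem switchMatrix_mul_self (hP : IsPartitionWithCell C D) :
    switchMatrix C D * switchMatrix C D = 1 := by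
  ext x y
  rcases hP.mem_D_or_mem_cell x with hx | ⟨i, hx⟩
  · rw [switchMatrix_mul_apply_of_mem_D hP hx, switchMatrix_apply_of_mem_D hP hx]
  rw [switchMatrix_mul_apply_of_mem_cell hP hx]
  by_cases hy : y ∈ C i
  · have hc : (#(C i) : ℚ) ≠ 0 := Nat.cast_ne_zero.mpr (card_ne_zero_of_mem hy)
    rw [sum_congr rfl fun z hz => switchMatrix_apply_of_mem_cell hP hz hy,
      switchMatrix_apply_of_mem_cell hP hx hy, sum_sub_distrib]
    simp only [sum_const, nsmul_eq_mul, one_apply, sum_ite_eq', hy, ↓reduceIte]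
    field_simp
    ring
  · rw [sum_eq_zero fun z hz => switchMatrix_apply_of_mem_cell_of_notMem hP hz hy,
      switchMatrix_apply_of_mem_cell_of_notMem hP hx hy,
      one_apply_ne (ne_of_mem_of_not_mem hx hy)]
    ring

end SwitchMatrix

section Switching

variable {V ι : Type*} {G : SimpleGraph V} {C : ι → Finset V} {D : Finset V}

theorem GMswitch_adj {x y : V} :
    (GMswitch G C D).Adj x y ↔ x ≠ y ∧ Xor (G.Adj x y)
      (∃ i, (x ∈ D ∧ y ∈ C i ∧ 2 * nbrCount G x (C i) = #(C i)) ∨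
        (y ∈ D ∧ x ∈ C i ∧ 2 * nbrCount G y (C i) = #(C i))) :=
  Iff.rfl

theorem adjM_GMswitch_of_mem_D_iff (hP : IsPartitionWithCell C D) {x y : V}
    (hxy : x ∈ D ↔ y ∈ D) : adjM (GMswitch G C D) x y = adjM G x y := by
  have hno : ¬ ∃ i, (x ∈ D ∧ y ∈ C i ∧ 2 * nbrCount G x (C i) = #(C i)) ∨
      (y ∈ D ∧ x ∈ C i ∧ 2 * nbrCount G y (C i) = #(C i)) := by
    rintro ⟨i, ⟨hx, hy, -⟩ | ⟨hy, hx, -⟩⟩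
    exacts [hP.notMem_D hy (hxy.mp hx), hP.notMem_D hx (hxy.mpr hy)]
  have hadj : (GMswitch G C D).Adj x y ↔ G.Adj x y := by
    simp only [GMswitch_adj, hno, xor_def, not_false_eq_true, and_true, false_and, or_false]
    exact and_iff_right_of_imp G.ne_of_adj
  simp only [adjM_apply, hadj]

theorem adjM_GMswitch_of_mem_D_of_mem_cell (hP : IsPartitionWithCell C D) {x y : V} {j : ι}
    (hx : x ∈ D) (hy : y ∈ C j) :
    adjM (GMswitch G C D) x y =
      if 2 * nbrCount G x (C j) = #(C j) then 1 - adjM G x y else adjM G x y := by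
  have hswitch : (∃ i, (x ∈ D ∧ y ∈ C i ∧ 2 * nbrCount G x (C i) = #(C i)) ∨
      (y ∈ D ∧ x ∈ C i ∧ 2 * nbrCount G y (C i) = #(C i))) ↔
      2 * nbrCount G x (C j) = #(C j) := by
    refine ⟨?_, fun h => ⟨j, Or.inl ⟨hx, hy, h⟩⟩⟩
    rintro ⟨i, ⟨-, hyi, h⟩ | ⟨hyD, -, -⟩⟩
    · rwa [hP.eq_of_mem_of_mem hy hyi]
    · exact absurd hyD (hP.notMem_D hy)
  have hne : x ≠ y := ne_of_mem_of_not_mem hx (hP.notMem_D hy)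
  simp only [adjM_apply, GMswitch_adj, hswitch, ne_eq, hne, not_false_eq_true, true_and]
  by_cases hA : G.Adj x y <;> by_cases hH : 2 * nbrCount G x (C j) = #(C j) <;> simp [hA, hH]

theorem adjM_GMswitch_eq_two_div_card_mul_nbrCount_sub (hP : IsPartitionWithCell C D)
    (hH : GMhalf G C D) {x y : V} {j : ι} (hx : x ∈ D) (hy : y ∈ C j) :
    adjM (GMswitch G C D) x y = 2 / #(C j) * nbrCount G x (C j) - adjM G x y := by
  have hpos : 0 < #(C j) := card_pos.mpr ⟨y, hy⟩
  have hc : (#(C j) : ℚ) ≠ 0 := by positivity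
  rw [adjM_GMswitch_of_mem_D_of_mem_cell hP hx hy]
  rcases hH x hx j with hnone | hhalf | hall
  · have hA : ¬ G.Adj x y := card_filter_eq_zero_iff.mp hnone y hy
    rw [if_neg (by omega), adjM_apply, if_neg hA, hnone]
    simp
  · have h : (2 * nbrCount G x (C j) : ℚ) = #(C j) := by exact_mod_cast hhalf
    rw [if_pos hhalf, div_mul_eq_mul_div, h, div_self hc]
  · have hA : G.Adj x y := card_filter_eq_iff.mp hall y hy
    rw [if_neg (by omega), adjM_apply, if_pos hA, hall]
    field_simp
    ring

end Switching

section Conjugation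

variable {V ι : Type*} [Fintype V] [DecidableEq V] {G : SimpleGraph V} {C : ι → Finset V}
  {D : Finset V}

theorem switchMatrix_mul_adjM_mul_switchMatrix_apply_of_mem_cell_of_mem_cell
    (hP : IsPartitionWithCell C D) (hEq : IsEquitableOn G C) {i j : ι} {x y : V}
    (hx : x ∈ C i) (hy : y ∈ C j) :
    (switchMatrix C D * adjM G * switchMatrix C D) x y = adjM G x y := by
  have hsum : ∑ w ∈ C j, (nbrCount G w (C i) : ℚ) = #(C j) * nbrCount G y (C i) := by
    exact_mod_cast sum_const_nat fun w hw => hEq j i w hw y hy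
  have hcount : (#(C i) : ℚ) * nbrCount G x (C j) = #(C j) * nbrCount G y (C i) := by
    exact_mod_cast hEq.card_mul_nbrCount_comm hx hy
  have hci : (#(C i) : ℚ) ≠ 0 := Nat.cast_ne_zero.mpr (card_ne_zero_of_mem hx)
  have hcj : (#(C j) : ℚ) ≠ 0 := Nat.cast_ne_zero.mpr (card_ne_zero_of_mem hy)
  simp only [mul_switchMatrix_apply_of_mem_cell hP hy, switchMatrix_mul_apply_of_mem_cell hP hx,
    sum_adjM_left]
  rw [sum_sub_distrib, ← mul_sum, hsum, sum_adjM_right]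
  field_simp
  linear_combination -2 * hcount

theorem switchMatrix_mul_adjM_mul_switchMatrix (hGM : IsGMPartition G C D) :
    switchMatrix C D * adjM G * switchMatrix C D = adjM (GMswitch G C D) := by
  obtain ⟨hP, hEq, hH⟩ := hGM
  ext x y
  rcases hP.mem_D_or_mem_cell x with hx | ⟨i, hx⟩ <;>
    rcases hP.mem_D_or_mem_cell y with hy | ⟨j, hy⟩
  · rw [mul_switchMatrix_apply_of_mem_D hP hy, switchMatrix_mul_apply_of_mem_D hP hx,
      adjM_GMswitch_of_mem_D_iff hP (iff_of_true hx hy)]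
  · simp only [mul_switchMatrix_apply_of_mem_cell hP hy, switchMatrix_mul_apply_of_mem_D hP hx,
      sum_adjM_right, adjM_GMswitch_eq_two_div_card_mul_nbrCount_sub hP hH hx hy]
  · rw [mul_switchMatrix_apply_of_mem_D hP hy, switchMatrix_mul_apply_of_mem_cell hP hx,
      sum_adjM_left, adjM_comm G x, adjM_comm _ x,
      adjM_GMswitch_eq_two_div_card_mul_nbrCount_sub hP hH hy hx]
  · rw [switchMatrix_mul_adjM_mul_switchMatrix_apply_of_mem_cell_of_mem_cell hP hEq hx hy,
      adjM_GMswitch_of_mem_D_iff hP (iff_of_false (hP.notMem_D hx) (hP.notMem_D hy))]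

end Conjugation

theorem charpoly_mul_mul_eq_of_mul_self_eq_one {n R : Type*} [CommRing R] [Fintype n]
    [DecidableEq n] {Q : Matrix n n R} (hQ : Q * Q = 1) (A : Matrix n n R) :
    (Q * A * Q).charpoly = A.charpoly := by
  rw [charpoly_mul_comm, ← Matrix.mul_assoc, hQ, Matrix.one_mul]

/-- a graph and its Godsil–McKay switch are cospectral. -/
theorem GMswitch_cospectral {V : Type*} [Fintype V] [DecidableEq V]
    (G : SimpleGraph V) {t : ℕ} (C : Fin t → Finset V) (D : Finset V)
    (hGM : IsGMPartition G C D) :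
    (adjM G).charpoly = (adjM (GMswitch G C D)).charpoly := by
  rw [← switchMatrix_mul_adjM_mul_switchMatrix hGM,
    charpoly_mul_mul_eq_of_mul_self_eq_one (switchMatrix_mul_self hGM.1)]
end

section
/- Let Γ and Δ be finite simple graphs and let ⋆ be the unified graph product of any fixed type [0 s₀₁ s₀₂; s₁₀ s₁₁ s₁₂; s₂₀ s₂₁ s₂₂] with s_{ij} ∈ {0,1}. If π = {C₁, …, C_t} is an equitable partition of V(Γ), then Π = {C_i × {w} : i ∈ [t], w ∈ V(Δ)} is an equitable partition of the product graph Γ ⋆ Δ. -/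
/-!
Whether `(a, w)` and `(c, w')` are adjacent in `Γ ⋆ Δ` depends only on `w`, `w'` and on which of
the three relations (equal, adjacent, distinct and non-adjacent) holds between `a` and `c`. Hence
the number of neighbours of `(a, w)` in `C j × {w'}` is a fixed combination of the numbers of
`c ∈ C j` in each relation to `a`. These are `[a ∈ C j]`, the number of neighbours of `a` in `C j`,
and what remains of `|C j|`; all three are constant on each cell of an equitable partition.
-/

open Classical Matrix Kronecker

open Finset

noncomputable def relIdx {V : Type*} (G : SimpleGraph V) (x y : V) : Fin 3 :=
  if x = y then 0 else if G.Adj x y then 1 else 2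

lemma relOfIdx_iff_eq_relIdx {V : Type*} (G : SimpleGraph V) (i : Fin 3) (x y : V) :
    relOfIdx G i x y ↔ i = relIdx G x y := by
  unfold relOfIdx relIdx
  by_cases hxy : x = y
  · subst hxy; simp
  · by_cases hadj : G.Adj x y <;> simp [hxy, hadj]

lemma relIdx_eq_zero_iff {V : Type*} (G : SimpleGraph V) {x y : V} :
    relIdx G x y = 0 ↔ x = y := by
  unfold relIdx; split_ifs <;> simp_all

lemma relIdx_eq_one_iff {V : Type*} (G : SimpleGraph V) {x y : V} :
    relIdx G x y = 1 ↔ G.Adj x y := by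
  unfold relIdx; split_ifs <;> simp_all

lemma unifiedProd_adj_iff {V W : Type*} (G : SimpleGraph V) (H : SimpleGraph W)
    (s : Fin 3 → Fin 3 → ℚ) (p q : V × W) :
    (unifiedProd G H s).Adj p q ↔ p ≠ q ∧ s (relIdx G p.1 q.1) (relIdx H p.2 q.2) = 1 := by
  simp only [unifiedProd, relOfIdx_iff_eq_relIdx]
  constructor
  · rintro ⟨hpq, i, j, hs, rfl, rfl⟩
    exact ⟨hpq, hs⟩
  · rintro ⟨hpq, hs⟩
    exact ⟨hpq, _, _, hs, rfl, rfl⟩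

lemma nbrCount_product_singleton {V W : Type*} (G : SimpleGraph (V × W)) (p : V × W)
    (T : Finset V) (w : W) :
    nbrCount G p (T ×ˢ {w}) = #{c ∈ T | G.Adj p (c, w)} := by
  rw [nbrCount, product_singleton, filter_map, card_map]
  rfl

lemma card_filter_comp_eq_sum_card_fiber {α β : Type*} [Fintype β] [DecidableEq β]
    (T : Finset α) (f : α → β) (P : β → Prop) [DecidablePred P] :
    #{c ∈ T | P (f c)} = ∑ k with P k, #{c ∈ T | f c = k} := by
  rw [card_eq_sum_card_fiberwise (f := f) (t := {k | P k}) fun c hc => by simp_all]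
  refine sum_congr rfl fun k hk => ?_
  rw [filter_filter]
  exact congr_arg card <| filter_congr fun c _ =>
    and_iff_right_of_imp fun hc => hc ▸ (mem_filter.1 hk).2

lemma sum_card_filter_relIdx {V : Type*} (G : SimpleGraph V) (T : Finset V) (a : V) :
    ∑ k, #{c ∈ T | relIdx G a c = k} = #T :=
  (card_eq_sum_card_fiberwise fun _ _ => mem_coe.2 (mem_univ _)).symm

lemma card_filter_relIdx_eq_of {V : Type*} (G : SimpleGraph V) {T : Finset V} {a b : V}
    (hmem : a ∈ T ↔ b ∈ T) (hnbr : nbrCount G a T = nbrCount G b T) (k : Fin 3) :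
    #{c ∈ T | relIdx G a c = k} = #{c ∈ T | relIdx G b c = k} := by
  have hself : ∀ x, #{c ∈ T | relIdx G x c = 0} = if x ∈ T then 1 else 0 := by
    intro x
    simp only [relIdx_eq_zero_iff, filter_eq]
    split_ifs <;> simp
  have hnbr' : ∀ x, #{c ∈ T | relIdx G x c = 1} = nbrCount G x T := fun x => by
    simp only [relIdx_eq_one_iff, nbrCount]
  have h0 : #{c ∈ T | relIdx G a c = 0} = #{c ∈ T | relIdx G b c = 0} := by
    simp only [hself, hmem]
  have h1 : #{c ∈ T | relIdx G a c = 1} = #{c ∈ T | relIdx G b c = 1} := by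
    rw [hnbr', hnbr', hnbr]
  -- the fiber over `2` is what the other two leave of `#T`
  have hsum := (sum_card_filter_relIdx G T a).trans (sum_card_filter_relIdx G T b).symm
  rw [Fin.sum_univ_three, Fin.sum_univ_three] at hsum
  fin_cases k
  · exact h0
  · exact h1
  · simp only [Fin.reduceFinMk, Fin.isValue]; omega

lemma mem_iff_mem_of_mem_of_pairwise_disjoint {V ι : Type*} {C : ι → Finset V}
    (hdisj : Pairwise fun i j => Disjoint (C i) (C j)) {i : ι} {a b : V}
    (ha : a ∈ C i) (hb : b ∈ C i) (j : ι) : a ∈ C j ↔ b ∈ C j := by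
  obtain rfl | hij := eq_or_ne i j
  · exact iff_of_true ha hb
  · exact iff_of_false (disjoint_left.1 (hdisj hij) ha) (disjoint_left.1 (hdisj hij) hb)

theorem equitable_unifiedProd_general {V W : Type*} (G : SimpleGraph V) (H : SimpleGraph W)
    (s : Fin 3 → Fin 3 → ℚ)
    {t : ℕ} (C : Fin t → Finset V)
    (hdisj : Pairwise fun i j => Disjoint (C i) (C j))
    (heq : IsEquitableOn G C) :
    IsEquitableOn (unifiedProd G H s)
      (fun c : Fin t × W => C c.1 ×ˢ ({c.2} : Finset W)) := by
  rintro ⟨i, w⟩ ⟨j, w'⟩ ⟨a, w₁⟩ ha ⟨b, w₂⟩ hb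
  simp only [mem_product, mem_singleton] at ha hb
  obtain ⟨ha, hw₁⟩ := ha
  obtain ⟨hb, hw₂⟩ := hb
  subst w₁ w₂
  have hfib := card_filter_relIdx_eq_of G (mem_iff_mem_of_mem_of_pairwise_disjoint hdisj ha hb j)
    (heq i j a ha b hb)
  simp only [nbrCount_product_singleton, unifiedProd_adj_iff, ne_eq, Prod.mk.injEq,
    ← relIdx_eq_zero_iff G]
  let P : Fin 3 → Prop := fun k => ¬(k = 0 ∧ w = w') ∧ s k (relIdx H w w') = 1
  rw [card_filter_comp_eq_sum_card_fiber _ (relIdx G a) P,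
    card_filter_comp_eq_sum_card_fiber _ (relIdx G b) P]
  exact sum_congr rfl fun k _ => hfib k

/-- an equitable partition of `Γ` induces an equitable partition of
`Γ ⋆ Δ` for the unified product of any type. -/
theorem equitable_unifiedProd {V W : Type*} [Fintype V] [DecidableEq V]
    [Fintype W] [DecidableEq W] (G : SimpleGraph V) (H : SimpleGraph W)
    (s : Fin 3 → Fin 3 → ℚ) (hs : ∀ i j, s i j = 0 ∨ s i j = 1) (hs00 : s 0 0 = 0)
    {t : ℕ} (C : Fin t → Finset V)
    (hne : ∀ i, (C i).Nonempty)
    (hdisj : Pairwise fun i j => Disjoint (C i) (C j))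
    (hcover : ∀ x : V, ∃ i, x ∈ C i)
    (heq : IsEquitableOn G C) :
    IsEquitableOn (unifiedProd G H s)
      (fun c : Fin t × W => C c.1 ×ˢ ({c.2} : Finset W)) :=
  equitable_unifiedProd_general G H s C hdisj heq
end

section
/- Let Γ be a finite simple graph with a Godsil–McKay partition π = {C₁, …, C_t, D} (Godsil–McKay cell D), let Δ be a finite simple graph, and let ⋆ be the unified graph product of any fixed type. Set C_i^{(w)} = C_i × {w} for w ∈ V(Δ), 𝒟 = D × V(Δ), and Π = {C_i^{(w)} : i ∈ [t], w ∈ V(Δ)} ∪ {𝒟}. Then Π is a Godsil–McKay partition of the product graph Γ ⋆ Δ with Godsil–McKay cell 𝒟. -/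
open Classical Matrix Kronecker

/-! Adjacency of `(x, w)` and `(y, w')` in `Γ ⋆ Δ` depends only on which of the three relations
(equal, adjacent, distinct non-adjacent) holds between `x, y` in `Γ` and between `w, w'` in `Δ`.
So the number of neighbours of `(x, w)` in a layer `C × {w'}` is the sum, over the relations `i`
with `s i j = 1` (`j` the relation between `w` and `w'`), of the number of `y ∈ C` in relation
`i` to `x`; these three numbers are `[x ∈ C]`, the neighbour count `k` of `x` in `C`, and
`|C| - [x ∈ C] - k`. Equitability transfers at once, and for `x ∈ D` (so `x ∉ C`) the possible
sums `0, k, |C| - k, |C|` all lie in `{0, |C|/2, |C|}` whenever `k` does. -/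

open Finset

noncomputable def relIndex {V : Type*} (G : SimpleGraph V) (x y : V) : Fin 3 :=
  if x = y then 0 else if G.Adj x y then 1 else 2

lemma relOfIdx_iff_eq_relIndex {V : Type*} (G : SimpleGraph V) (i : Fin 3) (x y : V) :
    relOfIdx G i x y ↔ i = relIndex G x y := by
  unfold relOfIdx relIndex
  by_cases hxy : x = y
  · subst hxy; simp
  · by_cases hadj : G.Adj x y <;> simp [hxy, hadj]

lemma unifiedProd_adj_mk_iff {V W : Type*} {G : SimpleGraph V} {H : SimpleGraph W}
    {s : Fin 3 → Fin 3 → ℚ} (hs00 : s 0 0 = 0) (x y : V) (w w' : W) :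
    (unifiedProd G H s).Adj (x, w) (y, w') ↔ s (relIndex G x y) (relIndex H w w') = 1 := by
  simp only [unifiedProd, relOfIdx_iff_eq_relIndex]
  constructor
  · rintro ⟨-, i, j, hs, rfl, rfl⟩
    exact hs
  · intro hs
    refine ⟨?_, _, _, hs, rfl, rfl⟩
    rintro ⟨⟩
    simp [relIndex, hs00] at hs

section relCount

variable {V : Type*} (G : SimpleGraph V) (x : V) (c : Finset V)

noncomputable def relCount (i : Fin 3) : ℕ := #{y ∈ c | relIndex G x y = i}

lemma relCount_zero : relCount G x c 0 = if x ∈ c then 1 else 0 := by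
  have : {y ∈ c | relIndex G x y = 0} = c.filter (x = ·) := by
    ext y
    by_cases hxy : x = y <;> by_cases hadj : G.Adj x y <;> simp [relIndex, hxy, hadj]
  rw [relCount, this, filter_eq]
  split_ifs <;> simp

lemma relCount_one : relCount G x c 1 = nbrCount G x c := by
  unfold relCount nbrCount
  congr 1
  refine filter_congr fun y _ => ?_
  by_cases hxy : x = y
  · subst hxy; simp [relIndex]
  · by_cases hadj : G.Adj x y <;> simp [relIndex, hxy, hadj]

lemma sum_relCount : ∑ i, relCount G x c i = #c :=
  (card_eq_sum_card_fiberwise fun _ _ => mem_univ _).symm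

lemma card_filter_relIndex (P : Fin 3 → Prop) [DecidablePred P] :
    #{y ∈ c | P (relIndex G x y)} = ∑ i ∈ univ.filter P, relCount G x c i := by
  rw [card_eq_sum_card_fiberwise (f := relIndex G x) (t := univ.filter P)
    fun y hy => mem_filter.2 ⟨mem_univ _, (mem_filter.1 hy).2⟩]
  refine sum_congr rfl fun i hi => ?_
  rw [filter_filter, relCount]
  congr 1
  refine filter_congr fun y _ => ?_
  constructor
  · exact And.right
  · rintro rfl
    exact ⟨(mem_filter.1 hi).2, rfl⟩

end relCount

lemma relCount_eq_of_mem_iff_of_nbrCount_eq {V : Type*} {G : SimpleGraph V} {x y : V}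
    {c : Finset V} (hmem : x ∈ c ↔ y ∈ c) (hnbr : nbrCount G x c = nbrCount G y c) :
    relCount G x c = relCount G y c := by
  have hx := sum_relCount G x c
  have hy := sum_relCount G y c
  simp only [Fin.sum_univ_three, relCount_zero, relCount_one, hmem, hnbr] at hx hy
  funext i
  fin_cases i
  · simp [relCount_zero, hmem]
  · simp [relCount_one, hnbr]
  · change relCount G x c 2 = relCount G y c 2
    omega

def IsGMCount (n k : ℕ) : Prop := k = 0 ∨ 2 * k = n ∨ k = n

lemma isGMCount_sum_relCount {V : Type*} {G : SimpleGraph V} {x : V} {c : Finset V}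
    (P : Fin 3 → Prop) [DecidablePred P] (hx : x ∉ c) (h : IsGMCount #c (nbrCount G x c)) :
    IsGMCount #c (∑ i ∈ univ.filter P, relCount G x c i) := by
  have htot := sum_relCount G x c
  simp only [Fin.sum_univ_three, relCount_zero, relCount_one, if_neg hx] at htot
  simp only [sum_filter, Fin.sum_univ_three, relCount_zero, relCount_one, if_neg hx]
  unfold IsGMCount at *
  split_ifs <;> omega

lemma nbrCount_unifiedProd_layer {V W : Type*} {G : SimpleGraph V} {H : SimpleGraph W}
    {s : Fin 3 → Fin 3 → ℚ} (hs00 : s 0 0 = 0) (x : V) (w w' : W) (c : Finset V) :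
    nbrCount (unifiedProd G H s) (x, w) (c ×ˢ {w'}) =
      ∑ i ∈ univ.filter (fun i => s i (relIndex H w w') = 1), relCount G x c i := by
  rw [← card_filter_relIndex, nbrCount, product_singleton, filter_map, card_map]
  congr 1
  exact filter_congr fun y _ => unifiedProd_adj_mk_iff hs00 x y w w'

section layers

variable {V W ι : Type*} {C : ι → Finset V} {D : Finset V}

lemma IsPartitionWithCell.prod_layers [Fintype W] [Nonempty W]
    (h : IsPartitionWithCell C D) :
    IsPartitionWithCell (fun c : ι × W => C c.1 ×ˢ {c.2}) (D ×ˢ univ) := by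
  obtain ⟨hCne, hDne, hpw, hCD, hcov⟩ := h
  refine ⟨fun c => (hCne c.1).product (singleton_nonempty c.2),
    hDne.product univ_nonempty, ?_, fun c => ?_, fun ⟨x, w⟩ => ?_⟩
  · rintro ⟨i, w⟩ ⟨j, w'⟩ hne
    by_cases hij : i = j
    · subst hij
      have hw : w ≠ w' := fun hw => hne (by rw [hw])
      exact disjoint_product.2 (Or.inr (disjoint_singleton.2 hw))
    · exact disjoint_product.2 (Or.inl (hpw hij))
  · exact disjoint_product.2 (Or.inl (hCD c.1))
  · rcases hcov x with hx | ⟨i, hi⟩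
    · exact Or.inl (mem_product.2 ⟨hx, mem_univ w⟩)
    · exact Or.inr ⟨(i, w), mem_product.2 ⟨hi, mem_singleton_self w⟩⟩

variable {G : SimpleGraph V} {H : SimpleGraph W} {s : Fin 3 → Fin 3 → ℚ}

lemma IsEquitableOn.unifiedProd_layers (hs00 : s 0 0 = 0) (hC : IsEquitableOn G C)
    (hpw : Pairwise fun i j => Disjoint (C i) (C j)) :
    IsEquitableOn (unifiedProd G H s) (fun c : ι × W => C c.1 ×ˢ {c.2}) := by
  rintro ⟨i, w⟩ ⟨j, w'⟩ ⟨x, wx⟩ hx ⟨y, wy⟩ hy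
  simp only [mem_product, mem_singleton] at hx hy
  obtain ⟨hx, rfl⟩ := hx
  obtain ⟨hy, rfl⟩ := hy
  have hmem : x ∈ C j ↔ y ∈ C j := by
    by_cases hij : i = j
    · subst hij
      exact iff_of_true hx hy
    · exact iff_of_false (disjoint_left.1 (hpw hij) hx) (disjoint_left.1 (hpw hij) hy)
  rw [nbrCount_unifiedProd_layer hs00, nbrCount_unifiedProd_layer hs00,
    relCount_eq_of_mem_iff_of_nbrCount_eq hmem (hC i j x hx y hy)]

lemma GMhalf.unifiedProd_layers [Fintype W] (hs00 : s 0 0 = 0) (hC : GMhalf G C D)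
    (hCD : ∀ i, Disjoint (C i) D) :
    GMhalf (unifiedProd G H s) (fun c : ι × W => C c.1 ×ˢ {c.2}) (D ×ˢ univ) := by
  rintro ⟨x, w⟩ hx ⟨i, w'⟩
  have hxD : x ∈ D := (mem_product.1 hx).1
  rw [card_product, card_singleton, mul_one, nbrCount_unifiedProd_layer hs00]
  exact isGMCount_sum_relCount (s · (relIndex H w w') = 1) (disjoint_right.1 (hCD i) hxD)
    (hC x hxD i)

end layers

theorem isGMPartition_unifiedProd_general {V W : Type*}
    [Fintype W] [Nonempty W] (G : SimpleGraph V) (H : SimpleGraph W)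
    (s : Fin 3 → Fin 3 → ℚ) (hs00 : s 0 0 = 0)
    {t : ℕ} (C : Fin t → Finset V) (D : Finset V)
    (hGM : IsGMPartition G C D) :
    IsGMPartition (unifiedProd G H s)
      (fun c : Fin t × W => C c.1 ×ˢ ({c.2} : Finset W))
      (D ×ˢ (Finset.univ : Finset W)) := by
  obtain ⟨hpart, hequit, hhalf⟩ := hGM
  exact ⟨hpart.prod_layers, hequit.unifiedProd_layers hs00 hpart.2.2.1,
    hhalf.unifiedProd_layers hs00 hpart.2.2.2.1⟩

/-- a Godsil–McKay partition of `Γ` induces a Godsil–McKay partition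
of `Γ ⋆ Δ` with Godsil–McKay cell `D × V(Δ)`. -/
theorem isGMPartition_unifiedProd {V W : Type*} [Fintype V] [DecidableEq V]
    [Fintype W] [DecidableEq W] [Nonempty W] (G : SimpleGraph V) (H : SimpleGraph W)
    (s : Fin 3 → Fin 3 → ℚ) (hs : ∀ i j, s i j = 0 ∨ s i j = 1) (hs00 : s 0 0 = 0)
    {t : ℕ} (C : Fin t → Finset V) (D : Finset V)
    (hGM : IsGMPartition G C D) :
    IsGMPartition (unifiedProd G H s)
      (fun c : Fin t × W => C c.1 ×ˢ ({c.2} : Finset W))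
      (D ×ˢ (Finset.univ : Finset W)) :=
  isGMPartition_unifiedProd_general G H s hs00 C D hGM
end

section
/- Let Γ be a finite simple graph with a Godsil–McKay partition π = {C₁, …, C_t, D} (cell D) and characteristic matrix S of {C₁, …, C_t}, let Δ be a finite simple graph, and let ⋆ be the unified product of type with parameters s_{ij} ∈ {0,1}. For (x, w) ∈ D × V(Δ), l ∈ [t], and w' ∈ V(Δ), let j ∈ {0,1,2} be the unique index with (B_j)_{ww'} = 1 (where B₀ = I, B₁ = A(Δ), B₂ = J − I − A(Δ)). Then the ((x,w), C_l^{(w')})-entry of A(Γ ⋆ Δ)_𝔡 (S ⊗ I) equals s₂ⱼ·|C_l| if x has 0 neighbors in C_l, ((s₁ⱼ + s₂ⱼ)/2)·|C_l| if x has exactly |C_l|/2 neighbors in C_l, and s₁ⱼ·|C_l| if x has |C_l| neighbors in C_l (here A(Γ ⋆ Δ)_𝔡 is the restriction of A(Γ ⋆ Δ) to rows indexed by D × V(Δ) and columns indexed by (C₁ ∪ ⋯ ∪ C_t) × V(Δ)). -/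
open Classical Matrix Kronecker

/-- The restriction `A(Γ ⋆ Δ)_𝔡` of the adjacency matrix of a graph on `V × W`
to rows indexed by `D × W` and columns indexed by `(V \ D) × W`. -/
noncomputable def adjMDprod {V W : Type*} (P : SimpleGraph (V × W)) (D : Finset V) :
    Matrix {p : V × W // p.1 ∈ D} {q : V × W // q.1 ∉ D} ℚ :=
  Matrix.of fun p q => if P.Adj p.1 q.1 then 1 else 0

/-- The characteristic matrix `S ⊗ I` of the product partition
`{C l × {w'}}`, with rows indexed by `(V \ D) × W`. -/
noncomputable def charMatResProd {V W : Type*} {t : ℕ} (C : Fin t → Finset V)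
    (D : Finset V) : Matrix {q : V × W // q.1 ∉ D} (Fin t × W) ℚ :=
  Matrix.of fun q c => if q.1.1 ∈ C c.1 ∧ q.1.2 = c.2 then 1 else 0

/-- The product `A(Γ ⋆ Δ)_𝔡 ⬝ (S ⊗ I)`. -/
noncomputable def adjMDprodS {V W : Type*} [Fintype V] [Fintype W] {t : ℕ}
    (P : SimpleGraph (V × W)) (C : Fin t → Finset V) (D : Finset V) :
    Matrix {p : V × W // p.1 ∈ D} (Fin t × W) ℚ :=
  adjMDprod P D * charMatResProd C D

/-!
Since `D` and `C l` are disjoint, the entry counts the `y ∈ C l` with `(x, w) ~ (y, w')` in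
`Γ ⋆ Δ`. As `x ≠ y`, the relation of `x, y` in `Γ` (adjacent or not) together with the relation
`j` of `w, w'` in `Δ` selects a single term `s i j • (A_i ⊗ B_j)`, so each `y` contributes `s 1 j`
or `s 2 j` according as it is a neighbour of `x`. The entry is thus
`n * s 1 j + (|C l| - n) * s 2 j` with `n` the number of neighbours of `x` in `C l`, and the three
cases `n = 0`, `2n = |C l|`, `n = |C l|` follow.
-/

lemma relOfIdx_unique {V : Type*} {G : SimpleGraph V} {i i' : Fin 3} {x y : V}
    (h : relOfIdx G i x y) (h' : relOfIdx G i' x y) : i = i' := by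
  rcases h with ⟨rfl, h⟩ | ⟨rfl, h⟩ | ⟨rfl, h1, h2⟩ <;>
    rcases h' with ⟨rfl, h'⟩ | ⟨rfl, h'⟩ | ⟨rfl, h1', h2'⟩ <;> simp_all

lemma relOfIdx_of_ne {V : Type*} (G : SimpleGraph V) {x y : V} (hxy : x ≠ y) :
    relOfIdx G (if G.Adj x y then 1 else 2) x y := by
  split_ifs with h
  · exact Or.inr (Or.inl ⟨rfl, h⟩)
  · exact Or.inr (Or.inr ⟨rfl, hxy, h⟩)

lemma unifiedProd_adj_iff_s9 {V W : Type*} {G : SimpleGraph V} {H : SimpleGraph W}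
    {s : Fin 3 → Fin 3 → ℚ} {i j : Fin 3} {x y : V} {w w' : W}
    (hi : relOfIdx G i x y) (hj : relOfIdx H j w w') :
    (unifiedProd G H s).Adj (x, w) (y, w') ↔ (x, w) ≠ (y, w') ∧ s i j = 1 := by
  refine and_congr_right fun _ => ⟨?_, fun hs => ⟨i, j, hs, hi, hj⟩⟩
  rintro ⟨i', j', hs, hi', hj'⟩
  rwa [relOfIdx_unique hi hi', relOfIdx_unique hj hj']

lemma unifiedProd_adj_indicator_of_ne {V W : Type*} (G : SimpleGraph V) (H : SimpleGraph W)
    {s : Fin 3 → Fin 3 → ℚ} (hs : ∀ i j, s i j = 0 ∨ s i j = 1)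
    {j : Fin 3} {x y : V} {w w' : W} (hj : relOfIdx H j w w') (hxy : x ≠ y) :
    (if (unifiedProd G H s).Adj (x, w) (y, w') then (1 : ℚ) else 0)
      = if G.Adj x y then s 1 j else s 2 j := by
  have hne : ((x, w) : V × W) ≠ (y, w') := fun h => hxy (congrArg Prod.fst h)
  have hsel : (if G.Adj x y then s 1 j else s 2 j) = s (if G.Adj x y then 1 else 2) j := by
    split_ifs <;> rfl
  rw [if_congr (unifiedProd_adj_iff_s9 (relOfIdx_of_ne G hxy) hj) rfl rfl, hsel]
  rcases hs (if G.Adj x y then 1 else 2) j with h | h <;> simp [h, hne]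

lemma sum_ite_adj_eq_nbrCount {V : Type*} (G : SimpleGraph V) (x : V) (c : Finset V) (a b : ℚ) :
    ∑ y ∈ c, (if G.Adj x y then a else b)
      = nbrCount G x c * a + (c.card - nbrCount G x c) * b := by
  have hcard := c.card_filter_add_card_filter_not (G.Adj x)
  rw [Finset.sum_ite, Finset.sum_const, Finset.sum_const, nsmul_eq_mul, nsmul_eq_mul, nbrCount,
    ← hcard]
  push_cast
  ring

/-- The product in `adjMDprodS` elaborated with the `CStarMatrix` multiplication instance, so
`Matrix.mul_apply` does not rewrite it. -/
lemma adjMDprodS_apply {V W : Type*} [Fintype V] [Fintype W] {t : ℕ}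
    (P : SimpleGraph (V × W)) (C : Fin t → Finset V) (D : Finset V)
    (p : {p : V × W // p.1 ∈ D}) (c : Fin t × W) :
    adjMDprodS P C D p c = ∑ q, adjMDprod P D p q * charMatResProd C D q c :=
  rfl

lemma adjMDprodS_apply_of_disjoint {V W : Type*} [Fintype V] [Fintype W] {t : ℕ}
    (P : SimpleGraph (V × W)) (C : Fin t → Finset V) {D : Finset V} {l : Fin t}
    (hCD : Disjoint (C l) D) (p : {p : V × W // p.1 ∈ D}) (w' : W) :
    adjMDprodS P C D p (l, w') = ∑ y ∈ C l, if P.Adj p.1 (y, w') then 1 else 0 := by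
  set f : V × W → ℚ := fun q => if q.1 ∈ C l ∧ q.2 = w' then (if P.Adj p.1 q then 1 else 0) else 0
  have hfD : ∑ q : {q : V × W // q.1 ∈ D}, f q = 0 :=
    Finset.sum_eq_zero fun q _ => if_neg fun h => Finset.disjoint_left.mp hCD h.1 q.2
  calc adjMDprodS P C D p (l, w') = ∑ q : {q : V × W // q.1 ∉ D}, f q := by
        rw [adjMDprodS_apply]
        refine Finset.sum_congr rfl fun q _ => ?_
        simp only [adjMDprod, charMatResProd, f, Matrix.of_apply, mul_ite, mul_one, mul_zero]
    _ = ∑ q, f q := by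
        rw [← Fintype.sum_subtype_add_sum_subtype (fun q : V × W => q.1 ∈ D), hfD, zero_add]
    _ = _ := by simp [f, Fintype.sum_prod_type, ite_and, Finset.sum_ite_mem]

lemma unifiedProd_adjMDprodS_apply {V W : Type*} [Fintype V] [Fintype W] (G : SimpleGraph V)
    (H : SimpleGraph W) {s : Fin 3 → Fin 3 → ℚ} (hs : ∀ i j, s i j = 0 ∨ s i j = 1) {t : ℕ}
    (C : Fin t → Finset V) {D : Finset V} {l : Fin t} (hCD : Disjoint (C l) D)
    {x : V} {w : W} (hx : x ∈ D) {w' : W} {j : Fin 3}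
    (hj : relOfIdx H j w w') :
    adjMDprodS (unifiedProd G H s) C D ⟨(x, w), hx⟩ (l, w')
      = nbrCount G x (C l) * s 1 j + ((C l).card - nbrCount G x (C l)) * s 2 j := by
  have hxC : x ∉ C l := Finset.disjoint_right.mp hCD hx
  rw [adjMDprodS_apply_of_disjoint _ C hCD, ← sum_ite_adj_eq_nbrCount]
  exact Finset.sum_congr rfl fun y hy =>
    unifiedProd_adj_indicator_of_ne G H hs hj (ne_of_mem_of_not_mem hy hxC).symm

theorem unifiedProd_adjMD_entries_general {V W : Type*} [Fintype V]
    [Fintype W] (G : SimpleGraph V) (H : SimpleGraph W)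
    (s : Fin 3 → Fin 3 → ℚ) (hs : ∀ i j, s i j = 0 ∨ s i j = 1)
    {t : ℕ} (C : Fin t → Finset V) (D : Finset V) (hGM : IsGMPartition G C D)
    (x : V) (w : W) (hx : ((x, w) : V × W).1 ∈ D) (l : Fin t) (w' : W) (j : Fin 3)
    (hj : relOfIdx H j w w') :
    (nbrCount G x (C l) = 0 →
      adjMDprodS (unifiedProd G H s) C D ⟨(x, w), hx⟩ (l, w')
        = s 2 j * ((C l).card : ℚ)) ∧
    (2 * nbrCount G x (C l) = (C l).card →
      adjMDprodS (unifiedProd G H s) C D ⟨(x, w), hx⟩ (l, w')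
        = (s 1 j + s 2 j) / 2 * ((C l).card : ℚ)) ∧
    (nbrCount G x (C l) = (C l).card →
      adjMDprodS (unifiedProd G H s) C D ⟨(x, w), hx⟩ (l, w')
        = s 1 j * ((C l).card : ℚ)) := by
  rw [unifiedProd_adjMDprodS_apply G H hs C (hGM.1.2.2.2.1 l) hx hj]
  refine ⟨fun hzero => ?_, fun hhalf => ?_, fun hall => ?_⟩
  · rw [hzero]
    push_cast
    ring
  · rw [← hhalf]
    push_cast
    ring
  · rw [hall]
    ring

/-- the entries of `A(Γ ⋆ Δ)_𝔡 (S ⊗ I)`. -/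
theorem unifiedProd_adjMD_entries {V W : Type*} [Fintype V] [DecidableEq V]
    [Fintype W] [DecidableEq W] (G : SimpleGraph V) (H : SimpleGraph W)
    (s : Fin 3 → Fin 3 → ℚ) (hs : ∀ i j, s i j = 0 ∨ s i j = 1) (hs00 : s 0 0 = 0)
    {t : ℕ} (C : Fin t → Finset V) (D : Finset V) (hGM : IsGMPartition G C D)
    (x : V) (w : W) (hx : ((x, w) : V × W).1 ∈ D) (l : Fin t) (w' : W) (j : Fin 3)
    (hj : relOfIdx H j w w') :
    (nbrCount G x (C l) = 0 →
      adjMDprodS (unifiedProd G H s) C D ⟨(x, w), hx⟩ (l, w')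
        = s 2 j * ((C l).card : ℚ)) ∧
    (2 * nbrCount G x (C l) = (C l).card →
      adjMDprodS (unifiedProd G H s) C D ⟨(x, w), hx⟩ (l, w')
        = (s 1 j + s 2 j) / 2 * ((C l).card : ℚ)) ∧
    (nbrCount G x (C l) = (C l).card →
      adjMDprodS (unifiedProd G H s) C D ⟨(x, w), hx⟩ (l, w')
        = s 1 j * ((C l).card : ℚ)) :=
  unifiedProd_adjMD_entries_general G H s hs C D hGM x w hx l w' j hj
end

section
/- Let Γ be a finite simple graph with a Godsil–McKay partition π = {C₁, …, C_t, D}. Let EBD(Γ) denote the extended bipartite double of Γ, i.e., the graph on V(Γ) × V(K₂) with adjacency matrix (I ⊗ A(K₂)) + (A(Γ) ⊗ A(K₂)) (the product of Γ and K₂ of type [000;110;000]), and let Π = {C_i × {w} : i ∈ [t], w ∈ V(K₂)} ∪ {D × V(K₂)}. Then Π is a Godsil–McKay partition of EBD(Γ) with Godsil–McKay cell D × V(K₂), and the extended bipartite double of sw_π Γ is isomorphic to sw_Π (EBD(Γ)). -/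
open Classical Matrix Kronecker

/-- The extended bipartite double of `G` : the graph on `V × Fin 2` with
adjacency matrix `(I ⊗ A(K₂)) + (A(G) ⊗ A(K₂))`. -/
def extBipartiteDouble {V : Type*} (G : SimpleGraph V) : SimpleGraph (V × Fin 2) where
  Adj p q := (p.1 = q.1 ∨ G.Adj p.1 q.1) ∧ p.2 ≠ q.2
  symm := by
    constructor
    rintro p q ⟨h1 | h1, h2⟩
    · exact ⟨Or.inl h1.symm, h2.symm⟩
    · exact ⟨Or.inr h1.symm, h2.symm⟩
  loopless := by constructor; rintro p ⟨-, h2⟩; exact h2 rfl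

/- A vertex `(x, a)` of the extended bipartite double sees, in the layer `C i × {w}`,
nothing if `w = a` and a copy of the closed neighbourhood of `x` in `C i` otherwise. For `x ∈ D`
the closed and open neighbourhoods in `C i` agree, so the counting conditions lift cell by cell,
and `(x, a)` is switched against `C i × {w}` exactly when `w ≠ a` and `x` is switched against
`C i`. Hence switching commutes with taking the extended bipartite double, already as an
equality of graphs. -/

open Finset

section ExtBipartiteDouble

variable {V ι : Type*}

@[simp]
lemma extBipartiteDouble_adj (G : SimpleGraph V) (p q : V × Fin 2) :
    (extBipartiteDouble G).Adj p q ↔ (p.1 = q.1 ∨ G.Adj p.1 q.1) ∧ p.2 ≠ q.2 :=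
  Iff.rfl

lemma card_filter_eq_or_adj (G : SimpleGraph V) (x : V) (s : Finset V) :
    #(s.filter fun y => x = y ∨ G.Adj x y) = nbrCount G x s + if x ∈ s then 1 else 0 := by
  have hdisj : Disjoint (s.filter (Eq x)) (s.filter (G.Adj x)) := by
    rw [disjoint_filter]
    rintro _ _ rfl
    exact G.irrefl
  rw [filter_or, card_union_of_disjoint hdisj, filter_eq, nbrCount, add_comm]
  split_ifs <;> simp

lemma nbrCount_extBipartiteDouble_prod_singleton (G : SimpleGraph V) (x : V) (a w : Fin 2)
    (s : Finset V) :
    nbrCount (extBipartiteDouble G) (x, a) (s ×ˢ {w}) =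
      if w = a then 0 else nbrCount G x s + if x ∈ s then 1 else 0 := by
  rw [nbrCount, ← card_filter_eq_or_adj]
  have hsplit :=
    filter_product (s := s) (t := {w}) (fun y => x = y ∨ G.Adj x y) (fun b => a ≠ b)
  simp only [extBipartiteDouble_adj]
  rw [hsplit, card_product, filter_singleton]
  split_ifs <;> simp_all

lemma mem_iff_eq_of_pairwise_disjoint {C : ι → Finset V}
    (hC : Pairwise fun i j => Disjoint (C i) (C j)) {i j : ι} {x : V} (hx : x ∈ C i) :
    x ∈ C j ↔ i = j :=
  ⟨fun hj => by_contra fun hij => disjoint_left.1 (hC hij) hx hj, fun h => h ▸ hx⟩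

lemma IsPartitionWithCell.prod_singleton {W : Type*} [Fintype W] [Nonempty W]
    {C : ι → Finset V} {D : Finset V} (h : IsPartitionWithCell C D) :
    IsPartitionWithCell (fun c : ι × W => C c.1 ×ˢ {c.2}) (D ×ˢ univ) := by
  obtain ⟨hC, hD, hCC, hCD, hcover⟩ := h
  refine ⟨fun c => (hC c.1).product (singleton_nonempty _), hD.product univ_nonempty, ?_,
    fun c => disjoint_product.2 (Or.inl (hCD c.1)), fun ⟨x, a⟩ => ?_⟩
  · rintro ⟨i, w⟩ ⟨j, w'⟩ hne
    refine disjoint_product.2 ?_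
    by_cases hij : i = j
    · subst hij
      exact Or.inr (disjoint_singleton.2 fun h => hne (Prod.ext rfl h))
    · exact Or.inl (hCC hij)
  · rcases hcover x with hx | ⟨i, hx⟩
    · exact Or.inl (mem_product.2 ⟨hx, mem_univ a⟩)
    · exact Or.inr ⟨(i, a), mem_product.2 ⟨hx, mem_singleton_self a⟩⟩

lemma IsEquitableOn.extBipartiteDouble {G : SimpleGraph V} {C : ι → Finset V}
    (hC : Pairwise fun i j => Disjoint (C i) (C j)) (h : IsEquitableOn G C) :
    IsEquitableOn (extBipartiteDouble G) fun c : ι × Fin 2 => C c.1 ×ˢ {c.2} := by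
  rintro ⟨i, w⟩ ⟨j, w'⟩ ⟨x, a⟩ hx ⟨y, b⟩ hy
  simp only [mem_product, mem_singleton] at hx hy
  obtain ⟨hx, rfl⟩ := hx
  obtain ⟨hy, rfl⟩ := hy
  simp only [nbrCount_extBipartiteDouble_prod_singleton, h i j x hx y hy,
    mem_iff_eq_of_pairwise_disjoint hC hx, mem_iff_eq_of_pairwise_disjoint hC hy]

lemma GMhalf.extBipartiteDouble {G : SimpleGraph V} {C : ι → Finset V} {D : Finset V}
    (hCD : ∀ i, Disjoint (C i) D) (h : GMhalf G C D) :
    GMhalf (extBipartiteDouble G) (fun c : ι × Fin 2 => C c.1 ×ˢ {c.2}) (D ×ˢ univ) := by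
  rintro ⟨x, a⟩ hx ⟨i, w⟩
  simp only [mem_product, mem_univ, and_true] at hx
  simp only [nbrCount_extBipartiteDouble_prod_singleton, card_product, card_singleton, mul_one,
    if_neg (disjoint_right.1 (hCD i) hx)]
  split_ifs
  · exact Or.inl rfl
  · exact h x hx i

lemma IsGMPartition.extBipartiteDouble {G : SimpleGraph V} {C : ι → Finset V} {D : Finset V}
    (h : IsGMPartition G C D) :
    IsGMPartition (extBipartiteDouble G) (fun c : ι × Fin 2 => C c.1 ×ˢ {c.2}) (D ×ˢ univ) :=
  ⟨h.1.prod_singleton, h.2.1.extBipartiteDouble h.1.2.2.1, h.2.2.extBipartiteDouble h.1.2.2.2.1⟩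

def IsGMFlip (G : SimpleGraph V) (C : ι → Finset V) (D : Finset V) (x y : V) : Prop :=
  ∃ i, x ∈ D ∧ y ∈ C i ∧ 2 * nbrCount G x (C i) = #(C i)

lemma GMswitch_adj_iff (G : SimpleGraph V) (C : ι → Finset V) (D : Finset V) (x y : V) :
    (GMswitch G C D).Adj x y ↔
      x ≠ y ∧ Xor (G.Adj x y) (IsGMFlip G C D x y ∨ IsGMFlip G C D y x) := by
  simp only [IsGMFlip, ← exists_or]
  rfl

lemma not_isGMFlip_self {G : SimpleGraph V} {C : ι → Finset V} {D : Finset V}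
    (hCD : ∀ i, Disjoint (C i) D) (x : V) : ¬ IsGMFlip G C D x x :=
  fun ⟨i, hxD, hxC, _⟩ => disjoint_left.1 (hCD i) hxC hxD

lemma two_mul_nbrCount_extBipartiteDouble_eq_card_iff {G : SimpleGraph V} {s : Finset V}
    (hs : s.Nonempty) {x : V} (hx : x ∉ s) (a w : Fin 2) :
    2 * nbrCount (extBipartiteDouble G) (x, a) (s ×ˢ {w}) = #(s ×ˢ {w}) ↔
      a ≠ w ∧ 2 * nbrCount G x s = #s := by
  rw [nbrCount_extBipartiteDouble_prod_singleton, if_neg hx, add_zero, card_product,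
    card_singleton, mul_one]
  split_ifs with hw
  · simp [hw, hs.card_pos.ne]
  · simp [Ne.symm hw]

lemma isGMFlip_extBipartiteDouble_iff {G : SimpleGraph V} {C : ι → Finset V} {D : Finset V}
    (hC : ∀ i, (C i).Nonempty) (hCD : ∀ i, Disjoint (C i) D) (x y : V) (a b : Fin 2) :
    IsGMFlip (extBipartiteDouble G) (fun c : ι × Fin 2 => C c.1 ×ˢ {c.2}) (D ×ˢ univ)
        (x, a) (y, b) ↔ a ≠ b ∧ IsGMFlip G C D x y := by
  constructor
  · rintro ⟨⟨i, w⟩, hx, hy, hhalf⟩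
    simp only [mem_product, mem_univ, and_true, mem_singleton] at hx hy
    obtain ⟨hy, rfl⟩ := hy
    rw [two_mul_nbrCount_extBipartiteDouble_eq_card_iff (hC i)
      (disjoint_right.1 (hCD i) hx)] at hhalf
    exact ⟨hhalf.1, i, hx, hy, hhalf.2⟩
  · rintro ⟨hab, i, hx, hy, hhalf⟩
    refine ⟨(i, b), mem_product.2 ⟨hx, mem_univ a⟩, mem_product.2 ⟨hy, mem_singleton_self b⟩, ?_⟩
    exact (two_mul_nbrCount_extBipartiteDouble_eq_card_iff (hC i)
      (disjoint_right.1 (hCD i) hx) a b).2 ⟨hab, hhalf⟩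

theorem GMswitch_extBipartiteDouble {G : SimpleGraph V} {C : ι → Finset V} {D : Finset V}
    (hC : ∀ i, (C i).Nonempty) (hCD : ∀ i, Disjoint (C i) D) :
    GMswitch (extBipartiteDouble G) (fun c : ι × Fin 2 => C c.1 ×ˢ {c.2}) (D ×ˢ univ) =
      extBipartiteDouble (GMswitch G C D) := by
  ext ⟨x, a⟩ ⟨y, b⟩
  simp only [GMswitch_adj_iff, isGMFlip_extBipartiteDouble_iff hC hCD, extBipartiteDouble_adj]
  by_cases hxy : x = y
  · subst hxy
    have hloop := not_isGMFlip_self (G := G) hCD x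
    simp [xor_def, hloop, ne_comm]
  · by_cases hab : a = b
    · simp [hab]
    · simp [xor_def, hxy, hab, Ne.symm hab]

end ExtBipartiteDouble

theorem extBipartiteDouble_switch_compat_general {V : Type*}
    (G : SimpleGraph V) {t : ℕ} (C : Fin t → Finset V) (D : Finset V)
    (hGM : IsGMPartition G C D) :
    IsGMPartition (extBipartiteDouble G)
        (fun c : Fin t × Fin 2 => C c.1 ×ˢ ({c.2} : Finset (Fin 2)))
        (D ×ˢ (Finset.univ : Finset (Fin 2)))
    ∧ Nonempty (extBipartiteDouble (GMswitch G C D)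
        ≃g GMswitch (extBipartiteDouble G)
            (fun c : Fin t × Fin 2 => C c.1 ×ˢ ({c.2} : Finset (Fin 2)))
            (D ×ˢ (Finset.univ : Finset (Fin 2)))) := by
  refine ⟨hGM.extBipartiteDouble, ?_⟩
  rw [GMswitch_extBipartiteDouble hGM.1.1 hGM.1.2.2.2.1]
  exact ⟨.refl⟩

/-- the induced partition is a Godsil–McKay partition of the
extended bipartite double, and the extended bipartite double of `sw_π Γ` is
isomorphic to the switch of the extended bipartite double of `Γ`. -/
theorem extBipartiteDouble_switch_compat {V : Type*} [Fintype V] [DecidableEq V]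
    (G : SimpleGraph V) {t : ℕ} (C : Fin t → Finset V) (D : Finset V)
    (hGM : IsGMPartition G C D) :
    IsGMPartition (extBipartiteDouble G)
        (fun c : Fin t × Fin 2 => C c.1 ×ˢ ({c.2} : Finset (Fin 2)))
        (D ×ˢ (Finset.univ : Finset (Fin 2)))
    ∧ Nonempty (extBipartiteDouble (GMswitch G C D)
        ≃g GMswitch (extBipartiteDouble G)
            (fun c : Fin t × Fin 2 => C c.1 ×ˢ ({c.2} : Finset (Fin 2)))
            (D ×ˢ (Finset.univ : Finset (Fin 2)))) :=
  extBipartiteDouble_switch_compat_general G C D hGM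
end

section
/- Let Γ be a finite simple graph with a Godsil–McKay partition π = {C₁, …, C_t, D}, let Δ be a finite simple graph, and let ⋆ be the unified product of type [010;110;110] (the clique extension type, with adjacency matrix (I ⊗ A(Δ)) + (A(Γ) ⊗ I) + (A(Γ) ⊗ A(Δ)) + ((J−I−A(Γ)) ⊗ I) + ((J−I−A(Γ)) ⊗ A(Δ))). Then, for the induced Godsil–McKay partition Π = {C_i × {w}} ∪ {D × V(Δ)} of Γ ⋆ Δ, every vertex of D × V(Δ) has either 0 or |C_i × {w}| neighbors in each cell C_i × {w}; consequently sw_Π(Γ ⋆ Δ) = Γ ⋆ Δ, i.e., switching with respect to Π does not change the graph. -/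
open Classical Matrix Kronecker

/-- The type `[010;110;110]` of the clique extension. -/
def sClique : Fin 3 → Fin 3 → ℚ := ![![0, 1, 0], ![1, 1, 0], ![1, 1, 0]]

/-! In the clique extension two vertices with distinct first coordinates are adjacent exactly
when their second coordinates are equal or adjacent. As `D` is disjoint from every `C i`, a
vertex `(x, w)` with `x ∈ D` is thus adjacent to all or none of `C i × {w'}`, so it never sees
exactly half of a cell, and there is nothing to switch. -/

theorem nbrCount_eq_zero_or_card_of_forall_adj_iff {V : Type*} {G : SimpleGraph V} {x : V}
    {c : Finset V} {P : Prop} (h : ∀ y ∈ c, G.Adj x y ↔ P) :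
    nbrCount G x c = 0 ∨ nbrCount G x c = c.card := by
  unfold nbrCount
  by_cases hP : P
  · exact Or.inr (congrArg Finset.card (Finset.filter_true_of_mem fun y hy => (h y hy).2 hP))
  · exact Or.inl (Finset.card_eq_zero.2
      (Finset.filter_false_of_mem fun y hy hadj => hP ((h y hy).1 hadj)))

theorem GMswitch_eq_self {V ι : Type*} {G : SimpleGraph V} {C : ι → Finset V} {D : Finset V}
    (h : ∀ x ∈ D, ∀ i, nbrCount G x (C i) = 0 ∨ nbrCount G x (C i) = (C i).card) :
    GMswitch G C D = G := by
  have no_half : ∀ x ∈ D, ∀ i, ∀ y ∈ C i, 2 * nbrCount G x (C i) ≠ (C i).card := by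
    intro x hx i y hy
    have hpos := Finset.card_pos.2 ⟨y, hy⟩
    rcases h x hx i with h0 | hall <;> omega
  ext x y
  simp only [GMswitch]
  have not_switched : ¬ ∃ i, (x ∈ D ∧ y ∈ C i ∧ 2 * nbrCount G x (C i) = (C i).card) ∨
      (y ∈ D ∧ x ∈ C i ∧ 2 * nbrCount G y (C i) = (C i).card) := by
    rintro ⟨i, ⟨hx, hy, hhalf⟩ | ⟨hy, hx, hhalf⟩⟩
    · exact no_half x hx i y hy hhalf
    · exact no_half y hy i x hx hhalf
  simp only [not_switched]
  constructor
  · rintro ⟨-, ⟨hadj, -⟩ | ⟨⟨⟩, -⟩⟩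
    exact hadj
  · exact fun hadj => ⟨hadj.ne, Or.inl ⟨hadj, id⟩⟩

theorem unifiedProd_sClique_adj_of_ne {V W : Type*} (G : SimpleGraph V) (H : SimpleGraph W)
    {x y : V} (hxy : x ≠ y) (w w' : W) :
    (unifiedProd G H sClique).Adj (x, w) (y, w') ↔ w = w' ∨ H.Adj w w' := by
  by_cases hadj : G.Adj x y <;>
    simp [unifiedProd, relOfIdx, sClique, Fin.exists_fin_succ, hxy, hadj]

theorem nbrCount_unifiedProd_sClique_eq_zero_or_card {V W : Type*} (G : SimpleGraph V)
    (H : SimpleGraph W) {c : Finset V} {x : V} (hx : x ∉ c) (w w' : W) :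
    nbrCount (unifiedProd G H sClique) (x, w) (c ×ˢ {w'}) = 0 ∨
      nbrCount (unifiedProd G H sClique) (x, w) (c ×ˢ {w'}) = (c ×ˢ {w'}).card := by
  refine nbrCount_eq_zero_or_card_of_forall_adj_iff (P := w = w' ∨ H.Adj w w')
    fun ⟨y, u⟩ hyu => ?_
  obtain ⟨hy, rfl⟩ : y ∈ c ∧ w' = u := by simpa using hyu
  exact unifiedProd_sClique_adj_of_ne G H (ne_of_mem_of_not_mem hy hx).symm w w'

theorem cliqueExtension_switch_trivial_general {V W : Type*}
    [Fintype W] (G : SimpleGraph V) (H : SimpleGraph W)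
    {t : ℕ} (C : Fin t → Finset V) (D : Finset V)
    (hGM : IsGMPartition G C D) :
    (∀ x ∈ D, ∀ w : W, ∀ (i : Fin t) (w' : W),
      nbrCount (unifiedProd G H sClique) (x, w) (C i ×ˢ ({w'} : Finset W)) = 0 ∨
      nbrCount (unifiedProd G H sClique) (x, w) (C i ×ˢ ({w'} : Finset W))
        = (C i ×ˢ ({w'} : Finset W)).card)
    ∧ GMswitch (unifiedProd G H sClique)
        (fun c : Fin t × W => C c.1 ×ˢ ({c.2} : Finset W))
        (D ×ˢ (Finset.univ : Finset W))
      = unifiedProd G H sClique := by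
  obtain ⟨⟨-, -, -, hdisj, -⟩, -, -⟩ := hGM
  have not_mem_cell : ∀ x ∈ D, ∀ i, x ∉ C i := fun x hx i hxi =>
    Finset.disjoint_left.1 (hdisj i) hxi hx
  refine ⟨fun x hx w i w' => ?_, GMswitch_eq_self ?_⟩
  · exact nbrCount_unifiedProd_sClique_eq_zero_or_card G H (not_mem_cell x hx i) w w'
  · rintro ⟨x, w⟩ hx ⟨i, w'⟩
    exact nbrCount_unifiedProd_sClique_eq_zero_or_card G H
      (not_mem_cell x (Finset.mem_product.1 hx).1 i) w w'

/-- for the clique-extension type, every vertex of the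
Godsil–McKay cell `D × V(Δ)` has `0` or all neighbors in each induced cell, so
switching with respect to the induced partition does not change the product graph. -/
theorem cliqueExtension_switch_trivial {V W : Type*} [Fintype V] [DecidableEq V]
    [Fintype W] [DecidableEq W] (G : SimpleGraph V) (H : SimpleGraph W)
    {t : ℕ} (C : Fin t → Finset V) (D : Finset V)
    (hGM : IsGMPartition G C D) :
    (∀ x ∈ D, ∀ w : W, ∀ (i : Fin t) (w' : W),
      nbrCount (unifiedProd G H sClique) (x, w) (C i ×ˢ ({w'} : Finset W)) = 0 ∨
      nbrCount (unifiedProd G H sClique) (x, w) (C i ×ˢ ({w'} : Finset W))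
        = (C i ×ˢ ({w'} : Finset W)).card)
    ∧ GMswitch (unifiedProd G H sClique)
        (fun c : Fin t × W => C c.1 ×ˢ ({c.2} : Finset W))
        (D ×ˢ (Finset.univ : Finset W))
      = unifiedProd G H sClique :=
  cliqueExtension_switch_trivial_general G H C D hGM
end
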